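/- arXiv:2011.03917 — 4 statements merged into one kernel-verified Lean document; each statement's English description precedes it below -/
import Mathlib

section
/- Under the Thompson sampling property, for any subset B of the countable action set, the empirical frequency N_{B,T}/T = (1/T) ∑_{t=1}^T 1_{B}(A_t) converges almost surely as T → ∞ to P(A*(θ*) ∈ B | H_∞). -/
/-!
By the Thompson sampling property, `1_B(A_t) = D_t + P(A* ∈ B | H_{t-1})` up to null sets, where
`D_t = 1_B(A_t) - P(A_t ∈ B | H_{t-1})` is a bounded martingale difference. By Lévy's upward
theorem `P(A* ∈ B | H_t) → P(A* ∈ B | H_∞)` a.s., hence so do its Cesàro means. For the noise,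
the increments of the martingale `∑_{t<n} D_t / (t+1)` are orthogonal in L², so it is L²-bounded
and converges a.s.; Kronecker's lemma then gives `(1/T) ∑_{t<T} D_t → 0` a.s.
-/

open MeasureTheory Filter Topology Finset

theorem sum_range_eq_smul_sub_sum_of_inv_succ_smul {E : Type*} [AddCommGroup E] [Module ℝ E]
    (d : ℕ → E) (n : ℕ) :
    ∑ t ∈ range n, d t = (n : ℝ) • ∑ t ∈ range n, ((t : ℝ) + 1)⁻¹ • d t
      - ∑ k ∈ range n, ∑ t ∈ range k, ((t : ℝ) + 1)⁻¹ • d t := by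
  induction n with
  | zero => simp
  | succ n ih =>
    have hn : ((n : ℝ) + 1) • ((n : ℝ) + 1)⁻¹ • d n = d n := by
      rw [smul_smul, mul_inv_cancel₀ (by positivity), one_smul]
    rw [sum_range_succ, ih, sum_range_succ, sum_range_succ, Nat.cast_succ]
    linear_combination (norm := module) -hn

theorem tendsto_inv_smul_sum_zero_of_tendsto_sum_inv_succ_smul {E : Type*}
    [NormedAddCommGroup E] [NormedSpace ℝ E] {d : ℕ → E} {c : E}
    (h : Tendsto (fun n ↦ ∑ t ∈ range n, ((t : ℝ) + 1)⁻¹ • d t) atTop (𝓝 c)) :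
    Tendsto (fun n : ℕ ↦ (n : ℝ)⁻¹ • ∑ t ∈ range n, d t) atTop (𝓝 0) := by
  rw [← sub_self c]
  refine (h.sub h.cesaro_smul).congr' ?_
  filter_upwards [eventually_ne_atTop 0] with n hn
  rw [sum_range_eq_smul_sub_sum_of_inv_succ_smul d n, smul_sub, smul_smul,
    inv_mul_cancel₀ (Nat.cast_ne_zero.2 hn), one_smul]

namespace MeasureTheory

variable {Ω : Type*} {m0 : MeasurableSpace Ω} {μ : Measure Ω} {ℱ : Filtration ℕ m0}
  {f : ℕ → Ω → ℝ}

theorem Martingale.integral_mul_sub_eq_zero [SigmaFiniteFiltration μ ℱ] (hf : Martingale f ℱ μ)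
    (hf2 : ∀ n, MemLp (f n) 2 μ) (n : ℕ) :
    ∫ ω, f n ω * (f (n + 1) ω - f n ω) ∂μ = 0 := by
  have hint : Integrable (f n * (f (n + 1) - f n)) μ :=
    (hf2 n).integrable_mul ((hf2 (n + 1)).sub (hf2 n))
  have hincr : μ[f (n + 1) - f n | ℱ n] =ᵐ[μ] 0 := by
    filter_upwards [condExp_sub (hf.integrable (n + 1)) (hf.integrable n) (ℱ n),
      hf.condExp_ae_eq n.le_succ] with ω h1 h2
    rw [h1, Pi.sub_apply, h2, condExp_of_stronglyMeasurable (ℱ.le n) (hf.stronglyAdapted n)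
      (hf.integrable n), sub_self, Pi.zero_apply]
  calc ∫ ω, f n ω * (f (n + 1) ω - f n ω) ∂μ = ∫ ω, (μ[f n * (f (n + 1) - f n) | ℱ n]) ω ∂μ :=
        (integral_condExp (ℱ.le n)).symm
    _ = 0 := by
      rw [integral_congr_ae ((condExp_mul_of_stronglyMeasurable_left (hf.stronglyAdapted n) hint
        ((hf.integrable (n + 1)).sub (hf.integrable n))).trans (EventuallyEq.rfl.mul hincr))]
      simp

theorem Martingale.integral_sq_succ [SigmaFiniteFiltration μ ℱ] (hf : Martingale f ℱ μ)
    (hf2 : ∀ n, MemLp (f n) 2 μ) (n : ℕ) :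
    ∫ ω, f (n + 1) ω ^ 2 ∂μ = ∫ ω, f n ω ^ 2 ∂μ + ∫ ω, (f (n + 1) ω - f n ω) ^ 2 ∂μ := by
  have hcross : Integrable (fun ω ↦ 2 * (f n ω * (f (n + 1) ω - f n ω))) μ :=
    ((hf2 n).integrable_mul ((hf2 (n + 1)).sub (hf2 n))).const_mul 2
  have hsq : Integrable (fun ω ↦ (f (n + 1) ω - f n ω) ^ 2) μ :=
    ((hf2 (n + 1)).sub (hf2 n)).integrable_sq
  calc ∫ ω, f (n + 1) ω ^ 2 ∂μ
      = ∫ ω, (f n ω ^ 2 + 2 * (f n ω * (f (n + 1) ω - f n ω))) + (f (n + 1) ω - f n ω) ^ 2 ∂μ :=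
        integral_congr_ae (ae_of_all _ fun ω ↦ by ring)
    _ = ∫ ω, f n ω ^ 2 ∂μ + ∫ ω, (f (n + 1) ω - f n ω) ^ 2 ∂μ := by
      have hfirst : Integrable (fun ω ↦ f n ω ^ 2 + 2 * (f n ω * (f (n + 1) ω - f n ω))) μ :=
        (hf2 n).integrable_sq.add hcross
      rw [integral_add hfirst hsq,
        integral_add (hf2 n).integrable_sq hcross, integral_const_mul,
        hf.integral_mul_sub_eq_zero hf2 n, mul_zero, add_zero]

theorem Martingale.integral_sq_eq_add_sum [SigmaFiniteFiltration μ ℱ] (hf : Martingale f ℱ μ)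
    (hf2 : ∀ n, MemLp (f n) 2 μ) (n : ℕ) :
    ∫ ω, f n ω ^ 2 ∂μ
      = ∫ ω, f 0 ω ^ 2 ∂μ + ∑ t ∈ range n, ∫ ω, (f (t + 1) ω - f t ω) ^ 2 ∂μ := by
  induction n with
  | zero => simp
  | succ n ih => rw [hf.integral_sq_succ hf2, ih, sum_range_succ, add_assoc]

theorem Martingale.exists_ae_tendsto_of_integral_sq_le [IsFiniteMeasure μ]
    (hf : Martingale f ℱ μ) (hf2 : ∀ n, MemLp (f n) 2 μ) {C : ℝ}
    (hC : ∀ n, ∫ ω, f n ω ^ 2 ∂μ ≤ C) :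
    ∀ᵐ ω ∂μ, ∃ c, Tendsto (fun n ↦ f n ω) atTop (𝓝 c) := by
  refine hf.submartingale.exists_ae_tendsto_of_bdd (R := (μ.real Set.univ + C).toNNReal)
    fun n ↦ ?_
  rw [eLpNorm_one_eq_lintegral_enorm, ← ofReal_integral_norm_eq_lintegral_enorm
    (hf.integrable n)]
  refine ENNReal.ofReal_le_ofReal ?_
  calc ∫ ω, ‖f n ω‖ ∂μ ≤ ∫ ω, 1 + f n ω ^ 2 ∂μ := by
        refine integral_mono (hf.integrable n).norm ((integrable_const 1).add
          (hf2 n).integrable_sq) fun ω ↦ ?_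
        rw [Real.norm_eq_abs]
        nlinarith [abs_nonneg (f n ω), sq_abs (f n ω)]
    _ ≤ μ.real Set.univ + C := by
      rw [integral_add (integrable_const 1) (hf2 n).integrable_sq, integral_const, smul_eq_mul,
        mul_one]
      linarith [hC n]

theorem ae_tendsto_inv_mul_sum_zero_of_condExp_eq_zero [IsFiniteMeasure μ] {D : ℕ → Ω → ℝ}
    (hD : ∀ t, StronglyMeasurable[ℱ (t + 1)] (D t)) (hD2 : ∀ t, MemLp (D t) 2 μ)
    (hD0 : ∀ t, μ[D t | ℱ t] =ᵐ[μ] 0)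
    (hsum : Summable fun t : ℕ ↦ (∫ ω, D t ω ^ 2 ∂μ) / ((t : ℝ) + 1) ^ 2) :
    ∀ᵐ ω ∂μ, Tendsto (fun n : ℕ ↦ (n : ℝ)⁻¹ * ∑ t ∈ range n, D t ω) atTop (𝓝 0) := by
  set M : ℕ → Ω → ℝ := fun n ↦ ∑ t ∈ range n, ((t : ℝ) + 1)⁻¹ • D t with hM_def
  have hM_succ : ∀ n ω, M (n + 1) ω - M n ω = ((n : ℝ) + 1)⁻¹ * D n ω := fun n ω ↦ by
    simp [hM_def, sum_range_succ]
  have hM : Martingale M ℱ μ := by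
    refine martingale_of_condExp_sub_eq_zero_nat (fun n ↦ ?_) (fun n ↦ ?_) fun n ↦ ?_
    · exact Finset.stronglyMeasurable_sum _ fun t ht ↦
        ((hD t).mono (ℱ.mono (mem_range.1 ht))).const_smul _
    · exact integrable_finsetSum' _ fun t _ ↦ ((hD2 t).integrable one_le_two).smul ((t : ℝ) + 1)⁻¹
    · rw [show M (n + 1) - M n = ((n : ℝ) + 1)⁻¹ • D n from funext (hM_succ n)]
      filter_upwards [condExp_smul ((n : ℝ) + 1)⁻¹ (D n) (ℱ n), hD0 n] with ω h1 h2
      simp [h1, h2]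
  have hM2 : ∀ n, MemLp (M n) 2 μ := fun n ↦ memLp_finsetSum' _ fun t _ ↦ (hD2 t).const_smul _
  have hM_bdd : ∀ n, ∫ ω, M n ω ^ 2 ∂μ ≤ ∑' t : ℕ, (∫ ω, D t ω ^ 2 ∂μ) / ((t : ℝ) + 1) ^ 2 := by
    intro n
    have hincr : ∀ t, ∫ ω, (M (t + 1) ω - M t ω) ^ 2 ∂μ
        = (∫ ω, D t ω ^ 2 ∂μ) / ((t : ℝ) + 1) ^ 2 := fun t ↦ by
      simp only [hM_succ, inv_mul_eq_div, div_pow, integral_div]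
    have hM0 : M 0 = 0 := by simp [hM_def]
    rw [hM.integral_sq_eq_add_sum hM2, hM0, sum_congr rfl fun t _ ↦ hincr t]
    simpa using hsum.sum_le_tsum (range n) fun t _ ↦ by positivity
  filter_upwards [hM.exists_ae_tendsto_of_integral_sq_le hM2 hM_bdd] with ω ⟨c, hc⟩
  simpa using tendsto_inv_smul_sum_zero_of_tendsto_sum_inv_succ_smul (d := fun t ↦ D t ω)
    (c := c) (by simpa [hM_def] using hc)

theorem ae_tendsto_inv_mul_sum_sub_condExp_zero [IsFiniteMeasure μ] {X : ℕ → Ω → ℝ} {K : ℝ}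
    (hX : ∀ t, StronglyMeasurable[ℱ (t + 1)] (X t)) (hXK : ∀ t, ∀ᵐ ω ∂μ, |X t ω| ≤ K) :
    ∀ᵐ ω ∂μ, Tendsto (fun n : ℕ ↦ (n : ℝ)⁻¹ * ∑ t ∈ range n, (X t ω - μ[X t | ℱ t] ω))
      atTop (𝓝 0) := by
  set D : ℕ → Ω → ℝ := fun t ↦ X t - μ[X t | ℱ t]
  have hD : ∀ t, StronglyMeasurable[ℱ (t + 1)] (D t) := fun t ↦
    (hX t).sub (stronglyMeasurable_condExp.mono (ℱ.mono t.le_succ))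
  have hDK : ∀ t, ∀ᵐ ω ∂μ, |D t ω| ≤ 2 * K := fun t ↦ by
    filter_upwards [hXK t, ae_bdd_abs_condExp_of_ae_bdd_abs (m := ℱ t) (hXK t)] with ω h1 h2
    calc |D t ω| ≤ |X t ω| + |μ[X t | ℱ t] ω| := abs_sub _ _
      _ ≤ 2 * K := by linarith
  have hD2 : ∀ t, MemLp (D t) 2 μ := fun t ↦
    .of_bound ((hD t).mono (ℱ.le _)).aestronglyMeasurable (2 * K) (by simpa using hDK t)
  have hD0 : ∀ t, μ[D t | ℱ t] =ᵐ[μ] 0 := fun t ↦ by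
    have hXint : Integrable (X t) μ :=
      .of_bound ((hX t).mono (ℱ.le _)).aestronglyMeasurable K (by simpa using hXK t)
    filter_upwards [condExp_sub hXint integrable_condExp (ℱ t)] with ω h
    rw [h, Pi.sub_apply, condExp_of_stronglyMeasurable (ℱ.le t) stronglyMeasurable_condExp
      integrable_condExp, sub_self, Pi.zero_apply]
  have hD_sq : ∀ t, ∫ ω, D t ω ^ 2 ∂μ ≤ μ.real Set.univ * (2 * K) ^ 2 := fun t ↦ by
    rw [← smul_eq_mul, ← integral_const]
    refine integral_mono_ae (hD2 t).integrable_sq (integrable_const _) ?_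
    filter_upwards [hDK t] with ω h
    nlinarith [abs_nonneg (D t ω), sq_abs (D t ω)]
  have hsum : Summable fun t : ℕ ↦ μ.real Set.univ * (2 * K) ^ 2 / ((t : ℝ) + 1) ^ 2 := by
    have h := ((summable_nat_add_iff 1).2 (Real.summable_one_div_nat_pow.2 one_lt_two)).mul_left
      (μ.real Set.univ * (2 * K) ^ 2)
    refine h.congr fun t ↦ ?_
    push_cast
    ring
  exact ae_tendsto_inv_mul_sum_zero_of_condExp_eq_zero hD hD2 hD0
    (hsum.of_nonneg_of_le (fun t ↦ by positivity)
      fun t ↦ div_le_div_of_nonneg_right (hD_sq t) (by positivity))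

end MeasureTheory

theorem thompson_sampling_empirical_frequency_general
    {Ω : Type*} {m0 : MeasurableSpace Ω} {μ : Measure Ω} [IsProbabilityMeasure μ]
    {𝒜 : Type*} [Countable 𝒜] [MeasurableSpace 𝒜] [MeasurableSingletonClass 𝒜]
    (ℋ : Filtration ℕ m0) (A : ℕ → Ω → 𝒜) (Astar : Ω → 𝒜)
    (hA : ∀ t, Measurable[ℋ (t + 1)] (A t))
    (hTS : ∀ (t : ℕ) (B : Set 𝒜),
      μ[Set.indicator (A t ⁻¹' B) (fun _ => (1 : ℝ)) | ℋ t]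
        =ᵐ[μ] μ[Set.indicator (Astar ⁻¹' B) (fun _ => (1 : ℝ)) | ℋ t])
    (B : Set 𝒜) :
    ∀ᵐ ω ∂μ, Tendsto
      (fun T : ℕ => (1 / (T : ℝ)) * ∑ t ∈ Finset.range T,
        Set.indicator (A t ⁻¹' B) (fun _ => (1 : ℝ)) ω)
      atTop (𝓝 ((μ[Set.indicator (Astar ⁻¹' B) (fun _ => (1 : ℝ)) | ⨆ t, ℋ t]) ω)) := by
  set X : ℕ → Ω → ℝ := fun t ↦ (A t ⁻¹' B).indicator fun _ ↦ 1
  set Y : Ω → ℝ := (Astar ⁻¹' B).indicator fun _ ↦ 1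
  have hX : ∀ t, StronglyMeasurable[ℋ (t + 1)] (X t) := fun t ↦
    stronglyMeasurable_const.indicator (hA t B.to_countable.measurableSet)
  have hX1 : ∀ t, ∀ᵐ ω ∂μ, |X t ω| ≤ 1 := fun t ↦ ae_of_all _ fun ω ↦ by
    by_cases h : ω ∈ A t ⁻¹' B <;> simp [X, h]
  have hTS_B : ∀ᵐ ω ∂μ, ∀ t, μ[X t | ℋ t] ω = μ[Y | ℋ t] ω := ae_all_iff.2 fun t ↦ hTS t B
  filter_upwards [ae_tendsto_inv_mul_sum_sub_condExp_zero hX hX1, tendsto_ae_condExp (ℱ := ℋ) Y,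
    hTS_B] with ω hnoise hlevy hts
  have hdrift : Tendsto (fun n : ℕ ↦ (n : ℝ)⁻¹ * ∑ t ∈ range n, μ[X t | ℋ t] ω) atTop
      (𝓝 (μ[Y | ⨆ t, ℋ t] ω)) := by
    simpa only [hts] using hlevy.cesaro
  refine (zero_add (μ[Y | ⨆ t, ℋ t] ω) ▸ hnoise.add hdrift).congr fun n ↦ ?_
  simp only [one_div, ← mul_add, ← sum_add_distrib, sub_add_cancel, X]

/-- Theorem 1 of the paper: under the Thompson sampling property, the empirical visit frequency
`N_{B,T}/T` of any set of actions `B` converges almost surely to `P(A*(θ*) ∈ B | H_∞)`. -/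
theorem thompson_sampling_empirical_frequency
    {Ω : Type*} {m0 : MeasurableSpace Ω} {μ : Measure Ω} [IsProbabilityMeasure μ]
    {𝒜 : Type*} [Countable 𝒜] [MeasurableSpace 𝒜] [MeasurableSingletonClass 𝒜]
    (ℋ : Filtration ℕ m0) (A : ℕ → Ω → 𝒜) (Astar : Ω → 𝒜)
    (hA : ∀ t, Measurable[ℋ (t + 1)] (A t)) (hAstar : Measurable Astar)
    (hTS : ∀ (t : ℕ) (B : Set 𝒜),
      μ[Set.indicator (A t ⁻¹' B) (fun _ => (1 : ℝ)) | ℋ t]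
        =ᵐ[μ] μ[Set.indicator (Astar ⁻¹' B) (fun _ => (1 : ℝ)) | ℋ t])
    (B : Set 𝒜) :
    ∀ᵐ ω ∂μ, Tendsto
      (fun T : ℕ => (1 / (T : ℝ)) * ∑ t ∈ Finset.range T,
        Set.indicator (A t ⁻¹' B) (fun _ => (1 : ℝ)) ω)
      atTop (𝓝 ((μ[Set.indicator (Astar ⁻¹' B) (fun _ => (1 : ℝ)) | ⨆ t, ℋ t]) ω)) :=
  thompson_sampling_empirical_frequency_general ℋ A Astar hA hTS B
end

section
/- Suppose a Thompson sampling agent on a countable ordered action set {a_1, a_2, ...} achieves sub-linear Bayesian regret, i.e., (1/T) ∑_{t=1}^T E[Y_{A*,t} − Y_{A_t,t}] → 0. Then for any indices i ≤ j, almost surely 1_{(Θ^j)^c}(θ*) · P(A*(θ*) = a_i | H_∞) = 0, where Θ^j = ⋃_{k=1}^j Θ_k and Θ_k = {θ : A*(θ) = a_k}. -/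
open MeasureTheory Filter Topology

/-! Fix an arm `i` and a measurable set `S` of parameters on which `i` is at least
`ε`-suboptimal. Both `A*(θ*)` and `A t` are functions of `(θ*, A t)`, so the expected regret at
time `t` is the expected mean gap `f θ* A* - f θ* (A t)`, which is at least
`ε P(θ* ∈ S, A t = i)`. Conditional independence and the Thompson sampling property turn this
probability into `E[P(θ* ∈ S | ℋ t) P(A* = i | ℋ t)]`, which by Lévy's upward theorem and
dominated convergence tends to `E[P(θ* ∈ S | ℋ ∞) P(A* = i | ℋ ∞)]`. Sub-linear regret makes this
limit vanish, and `P(θ* ∈ S | ℋ ∞) ≠ 0` a.s. on `{θ* ∈ S}`, so `P(A* = i | ℋ ∞) = 0` there.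
Finally, smallest-index tie-breaking makes every arm below `A*(θ)` strictly suboptimal, so
countably many sets `S` cover `{j < A*(θ*)}`. -/

section CountableIndex

variable {Ω ι : Type*} [Countable ι] {m m0 : MeasurableSpace Ω} {μ : Measure Ω}

lemma ae_abs_le_condExp_of_abs_le {Y g : ι → Ω → ℝ} (hY : ∀ a, Integrable (Y a) μ)
    {G : Ω → ℝ} (hG : Integrable G μ) (hYG : ∀ᵐ ω ∂μ, ∀ a, |Y a ω| ≤ G ω)
    (hYg : ∀ a, μ[Y a | m] =ᵐ[μ] g a) :
    ∀ᵐ ω ∂μ, ∀ a, |g a ω| ≤ μ[G | m] ω := by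
  refine ae_all_iff.2 fun a => ?_
  filter_upwards [hYg a, abs_condExp_ae_le_condExp_abs (m := m) (μ := μ) (Y a),
    condExp_mono (m := m) (hY a).abs hG (hYG.mono fun ω h => h a)] with ω hg habs hmono
  rw [← hg]
  exact habs.trans hmono

variable [MeasurableSpace ι] [MeasurableSingletonClass ι]

lemma measurable_apply_of_countable {β : Type*} [MeasurableSpace β] {u : ι → Ω → β}
    (hu : ∀ a, Measurable (u a)) {N : Ω → ι} (hN : Measurable N) :
    Measurable fun ω => u (N ω) ω :=
  (measurable_from_prod_countable_left (f := fun p : Ω × ι => u p.2 p.1) hu).comp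
    (measurable_id.prodMk hN)

lemma integrable_apply_of_abs_le {u : ι → Ω → ℝ} (hu : ∀ a, Measurable (u a))
    {N : Ω → ι} (hN : Measurable N) {G : Ω → ℝ} (hG : Integrable G μ)
    (huG : ∀ᵐ ω ∂μ, ∀ a, |u a ω| ≤ G ω) :
    Integrable (fun ω => u (N ω) ω) μ :=
  hG.mono' (measurable_apply_of_countable hu hN).aestronglyMeasurable
    (huG.mono fun ω h => h (N ω))

lemma integral_eq_tsum_setIntegral_preimage_singleton {v : Ω → ℝ} (hv : Integrable v μ)
    {N : Ω → ι} (hN : Measurable N) :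
    ∫ ω, v ω ∂μ = ∑' a, ∫ ω in N ⁻¹' {a}, v ω ∂μ := by
  have hcover : (⋃ a, N ⁻¹' {a}) = Set.univ := by ext ω; simp
  rw [← setIntegral_univ, ← hcover]
  exact integral_iUnion (fun a => hN (measurableSet_singleton a))
    (fun a b hab => Set.disjoint_left.2 fun ω ha hb => hab (ha.symm.trans hb))
    (hcover ▸ hv.integrableOn)

lemma integral_apply_eq_of_condExp_eq (hm : m ≤ m0) [SigmaFinite (μ.trim hm)]
    {Y g : ι → Ω → ℝ} (hY : ∀ a, Integrable (Y a) μ) (hYg : ∀ a, μ[Y a | m] =ᵐ[μ] g a)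
    {N : Ω → ι} (hN : Measurable[m] N) (hYN : Integrable (fun ω => Y (N ω) ω) μ)
    (hgN : Integrable (fun ω => g (N ω) ω) μ) :
    ∫ ω, Y (N ω) ω ∂μ = ∫ ω, g (N ω) ω ∂μ := by
  rw [integral_eq_tsum_setIntegral_preimage_singleton hYN (hN.mono hm le_rfl),
    integral_eq_tsum_setIntegral_preimage_singleton hgN (hN.mono hm le_rfl)]
  refine tsum_congr fun a => ?_
  have hNa : MeasurableSet[m] (N ⁻¹' {a}) := hN (measurableSet_singleton a)
  calc ∫ ω in N ⁻¹' {a}, Y (N ω) ω ∂μ = ∫ ω in N ⁻¹' {a}, Y a ω ∂μ :=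
        setIntegral_congr_fun (hm _ hNa) fun ω hω => by rw [hω]
    _ = ∫ ω in N ⁻¹' {a}, μ[Y a | m] ω ∂μ := (setIntegral_condExp hm (hY a) hNa).symm
    _ = ∫ ω in N ⁻¹' {a}, g a ω ∂μ := integral_congr_ae (ae_restrict_of_ae (hYg a))
    _ = ∫ ω in N ⁻¹' {a}, g (N ω) ω ∂μ :=
        setIntegral_congr_fun (hm _ hNa) fun ω hω => by rw [hω]

lemma mul_measureReal_le_integral_sub_apply [IsFiniteMeasure μ] (hm : m ≤ m0)
    {Y g : ι → Ω → ℝ} (hY : ∀ a, Measurable (Y a)) (hg : ∀ a, Measurable (g a))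
    {G : Ω → ℝ} (hG : Integrable G μ) (hYG : ∀ᵐ ω ∂μ, ∀ a, |Y a ω| ≤ G ω)
    (hYg : ∀ a, μ[Y a | m] =ᵐ[μ] g a) {N₁ N₂ : Ω → ι} (hN₁ : Measurable[m] N₁)
    (hN₂ : Measurable[m] N₂) (hgap_nonneg : ∀ ω, g (N₂ ω) ω ≤ g (N₁ ω) ω)
    {D : Set Ω} (hD : MeasurableSet D) {ε : ℝ} (hgap : ∀ ω ∈ D, ε ≤ g (N₁ ω) ω - g (N₂ ω) ω) :
    ε * μ.real D ≤ ∫ ω, (Y (N₁ ω) ω - Y (N₂ ω) ω) ∂μ := by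
  have hYi : ∀ a, Integrable (Y a) μ := fun a =>
    integrable_apply_of_abs_le hY measurable_const hG hYG
  have hYN : ∀ N : Ω → ι, Measurable[m] N → Integrable (fun ω => Y (N ω) ω) μ := fun N hN =>
    integrable_apply_of_abs_le hY (hN.mono hm le_rfl) hG hYG
  have hgN : ∀ N : Ω → ι, Measurable[m] N → Integrable (fun ω => g (N ω) ω) μ := fun N hN =>
    integrable_apply_of_abs_le hg (hN.mono hm le_rfl) integrable_condExp
      (ae_abs_le_condExp_of_abs_le hYi hG hYG hYg)
  rw [integral_sub (hYN N₁ hN₁) (hYN N₂ hN₂),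
    integral_apply_eq_of_condExp_eq hm hYi hYg hN₁ (hYN N₁ hN₁) (hgN N₁ hN₁),
    integral_apply_eq_of_condExp_eq hm hYi hYg hN₂ (hYN N₂ hN₂) (hgN N₂ hN₂),
    ← integral_sub (hgN N₁ hN₁) (hgN N₂ hN₂), mul_comm, ← smul_eq_mul,
    ← integral_indicator_const ε hD]
  refine integral_mono ((integrable_const ε).indicator hD)
    ((hgN N₁ hN₁).sub (hgN N₂ hN₂)) ?_
  intro ω
  by_cases hω : ω ∈ D
  · simpa [Set.indicator_of_mem hω] using hgap ω hω
  · simpa [Set.indicator_of_notMem hω] using hgap_nonneg ω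

end CountableIndex

section ConditionalProbability

variable {Ω : Type*} {m m0 : MeasurableSpace Ω} {μ : Measure Ω} {s t u : Set Ω}

lemma ae_condExp_indicator_mem_Icc :
    ∀ᵐ ω ∂μ, μ[s.indicator (fun _ => (1 : ℝ)) | m] ω ∈ Set.Icc 0 1 := by
  have h01 : ∀ ω, s.indicator (fun _ => (1 : ℝ)) ω ∈ Set.Icc 0 1 := fun ω => by
    by_cases hω : ω ∈ s <;> simp [hω]
  filter_upwards [condExp_nonneg (m := m) (ae_of_all μ fun ω => (h01 ω).1),
    condExp_le_nonneg_const (m := m) zero_le_one (ae_of_all μ fun ω => (h01 ω).2)] with ω h0 h1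
  exact ⟨h0, h1⟩

variable [IsFiniteMeasure μ]

lemma ae_condExp_indicator_ne_zero (hm : m ≤ m0) (hs : MeasurableSet s) :
    ∀ᵐ ω ∂μ, ω ∈ s → μ[s.indicator (fun _ => (1 : ℝ)) | m] ω ≠ 0 := by
  set P := μ[s.indicator (fun _ => (1 : ℝ)) | m]
  have hZ : MeasurableSet[m] (P ⁻¹' {0}) :=
    stronglyMeasurable_condExp.measurable (measurableSet_singleton 0)
  have hnull : μ.real (s ∩ P ⁻¹' {0}) = 0 := by
    rw [← measureReal_restrict_apply hs, ← integral_indicator_one hs,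
      ← setIntegral_condExp hm ((integrable_const 1).indicator hs) hZ]
    exact setIntegral_eq_zero_of_forall_eq_zero fun ω hω => hω
  filter_upwards [measure_eq_zero_iff_ae_notMem.1
    ((measureReal_eq_zero_iff (measure_ne_top μ _)).1 hnull)] with ω hω hωs hP
  exact hω ⟨hωs, hP⟩

lemma integral_condExp_mul_condExp_eq_measureReal_inter (hm : m ≤ m0)
    (hst : MeasurableSet (s ∩ t))
    (hindep : μ[(s ∩ t).indicator (fun _ => (1 : ℝ)) | m] =ᵐ[μ] fun ω =>
      μ[s.indicator (fun _ => (1 : ℝ)) | m] ω * μ[t.indicator (fun _ => (1 : ℝ)) | m] ω)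
    (hlaw : μ[t.indicator (fun _ => (1 : ℝ)) | m] =ᵐ[μ] μ[u.indicator (fun _ => (1 : ℝ)) | m]) :
    ∫ ω, μ[s.indicator (fun _ => (1 : ℝ)) | m] ω * μ[u.indicator (fun _ => (1 : ℝ)) | m] ω ∂μ
      = μ.real (s ∩ t) := by
  calc _ = ∫ ω, μ[(s ∩ t).indicator (fun _ => (1 : ℝ)) | m] ω ∂μ :=
        integral_congr_ae (by filter_upwards [hindep, hlaw] with ω h1 h2; rw [h1, h2])
    _ = μ.real (s ∩ t) := (integral_condExp hm).trans (integral_indicator_one hst)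

lemma tendsto_integral_condExp_mul_condExp (ℋ : Filtration ℕ m0) :
    Tendsto (fun n => ∫ ω, μ[s.indicator (fun _ => (1 : ℝ)) | ℋ n] ω *
        μ[t.indicator (fun _ => (1 : ℝ)) | ℋ n] ω ∂μ) atTop
      (𝓝 (∫ ω, μ[s.indicator (fun _ => (1 : ℝ)) | ⨆ n, ℋ n] ω *
        μ[t.indicator (fun _ => (1 : ℝ)) | ⨆ n, ℋ n] ω ∂μ)) := by
  refine tendsto_integral_of_dominated_convergence (fun _ => 1)
    (fun n => (stronglyMeasurable_condExp.mul stronglyMeasurable_condExp).aestronglyMeasurable.mono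
      (ℋ.le n)) (integrable_const 1) (fun n => ?_) ?_
  · filter_upwards [ae_condExp_indicator_mem_Icc (m := ℋ n) (μ := μ) (s := s),
      ae_condExp_indicator_mem_Icc (m := ℋ n) (μ := μ) (s := t)] with ω hs ht
    rw [Real.norm_eq_abs, abs_of_nonneg (mul_nonneg hs.1 ht.1)]
    exact mul_le_one₀ hs.2 ht.1 ht.2
  · filter_upwards [tendsto_ae_condExp (ℱ := ℋ) (μ := μ) (s.indicator fun _ => (1 : ℝ)),
      tendsto_ae_condExp (ℱ := ℋ) (μ := μ) (t.indicator fun _ => (1 : ℝ))] with ω hs ht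
    exact hs.mul ht

lemma ae_condExp_iSup_indicator_eq_zero_of_cesaro_le (ℋ : Filtration ℕ m0)
    (hs : MeasurableSet s) {ε : ℝ} (hε : 0 < ε) {r : ℕ → ℝ}
    (hr : Tendsto (fun T : ℕ => (1 / (T : ℝ)) * ∑ n ∈ Finset.range T, r n) atTop (𝓝 0))
    (hle : ∀ n, ε * ∫ ω, μ[s.indicator (fun _ => (1 : ℝ)) | ℋ n] ω *
        μ[t.indicator (fun _ => (1 : ℝ)) | ℋ n] ω ∂μ ≤ r n) :
    ∀ᵐ ω ∂μ, ω ∈ s → μ[t.indicator (fun _ => (1 : ℝ)) | ⨆ n, ℋ n] ω = 0 := by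
  set P := μ[s.indicator (fun _ => (1 : ℝ)) | ⨆ n, ℋ n]
  set Q := μ[t.indicator (fun _ => (1 : ℝ)) | ⨆ n, ℋ n]
  have hPQ_nonneg : 0 ≤ᵐ[μ] fun ω => P ω * Q ω := by
    filter_upwards [ae_condExp_indicator_mem_Icc (m := ⨆ n, ℋ n) (μ := μ) (s := s),
      ae_condExp_indicator_mem_Icc (m := ⨆ n, ℋ n) (μ := μ) (s := t)] with ω hs ht
    exact mul_nonneg hs.1 ht.1
  have hPQ_int : Integrable (fun ω => P ω * Q ω) μ := by
    refine integrable_condExp.bdd_mul (c := 1)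
      (stronglyMeasurable_condExp.mono (iSup_le ℋ.le)).aestronglyMeasurable ?_
    filter_upwards [ae_condExp_indicator_mem_Icc (m := ⨆ n, ℋ n) (μ := μ) (s := s)] with ω hs
    rw [Real.norm_eq_abs, abs_of_nonneg hs.1]
    exact hs.2
  have hlim : ε * ∫ ω, P ω * Q ω ∂μ ≤ 0 := by
    refine le_of_tendsto_of_tendsto' ((tendsto_integral_condExp_mul_condExp ℋ).const_mul ε).cesaro
      hr fun T => ?_
    rw [one_div]
    exact mul_le_mul_of_nonneg_left (Finset.sum_le_sum fun n _ => hle n) (by positivity)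
  have hPQ : (fun ω => P ω * Q ω) =ᵐ[μ] 0 :=
    (integral_eq_zero_iff_of_nonneg_ae hPQ_nonneg hPQ_int).1 <| le_antisymm
      (nonpos_of_mul_nonpos_right hlim hε) (integral_nonneg_of_ae hPQ_nonneg)
  filter_upwards [hPQ, ae_condExp_indicator_ne_zero (iSup_le ℋ.le) hs] with ω hω hP hωs
  exact (mul_eq_zero.1 hω).resolve_left (hP hωs)

end ConditionalProbability

lemma lt_of_lt_of_isLeast_argmax {ι α : Type*} [Preorder ι] [PartialOrder α] {φ : ι → α}
    {k a : ι} (hk : IsLeast {k | ∀ b, φ b ≤ φ k} k) (ha : a < k) : φ a < φ k :=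
  (hk.1 a).lt_of_ne fun h => (hk.2 fun b => (hk.1 b).trans h.ge).not_gt ha

theorem thompson_lemma1
    {Ω : Type*} {m0 : MeasurableSpace Ω} {μ : Measure Ω} [IsProbabilityMeasure μ]
    {Θ : Type*} [mΘ : MeasurableSpace Θ]
    (θstar : Ω → Θ) (hθ : Measurable θstar)
    (f : Θ → ℕ → ℝ) (hf : ∀ a, Measurable fun θ => f θ a)
    (Astar : Θ → ℕ) (hAstarmeas : Measurable Astar)
    -- `Astar θ` is the arg max of `f θ ·` with smallest-index tie-breaking
    (hopt : ∀ θ a, f θ a ≤ f θ (Astar θ))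
    (hmin : ∀ θ k, (∀ a, f θ a ≤ f θ k) → Astar θ ≤ k)
    (ℋ : Filtration ℕ m0)
    -- `A t` is the action drawn at time `t+1`, chosen given the history `ℋ t`
    (A : ℕ → Ω → ℕ) (hA : ∀ t, Measurable[ℋ (t + 1)] (A t))
    (Y : ℕ → ℕ → Ω → ℝ) (hY : ∀ a t, Measurable (Y a t))
    (hYint : ∀ t, Integrable (fun ω => ⨆ a, |Y a t ω|) μ)
    (hYbdd : ∀ t, ∀ᵐ ω ∂μ, BddAbove (Set.range fun a => |Y a t ω|))
    (hmean : ∀ a t : ℕ,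
      μ[Y a t | MeasurableSpace.comap (fun ω => (θstar ω, A t ω)) inferInstance]
        =ᵐ[μ] fun ω => f (θstar ω) a)
    -- the Thompson sampling property
    (hTS : ∀ (t : ℕ) (B : Set ℕ),
      μ[Set.indicator (A t ⁻¹' B) (fun _ => (1 : ℝ)) | ℋ t]
        =ᵐ[μ] μ[Set.indicator ((fun ω => Astar (θstar ω)) ⁻¹' B) (fun _ => (1 : ℝ)) | ℋ t])
    -- conditional independence of `θ*` and `A t` given the history `ℋ t`
    (hCI : ∀ (t : ℕ) (S : Set Θ) (a : ℕ), MeasurableSet S →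
      μ[Set.indicator (θstar ⁻¹' S ∩ A t ⁻¹' {a}) (fun _ => (1 : ℝ)) | ℋ t]
        =ᵐ[μ] fun ω => (μ[Set.indicator (θstar ⁻¹' S) (fun _ => (1 : ℝ)) | ℋ t]) ω *
            (μ[Set.indicator (A t ⁻¹' {a}) (fun _ => (1 : ℝ)) | ℋ t]) ω)
    -- sub-linear Bayesian regret
    (hregret : Tendsto (fun T : ℕ => (1 / (T : ℝ)) * ∑ t ∈ Finset.range T,
        ∫ ω, (Y (Astar (θstar ω)) t ω - Y (A t ω) t ω) ∂μ) atTop (𝓝 0))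
    (i j : ℕ) (hij : i ≤ j) :
    ∀ᵐ ω ∂μ, j < Astar (θstar ω) →
      (μ[Set.indicator ((fun ω' => Astar (θstar ω')) ⁻¹' {i}) (fun _ => (1 : ℝ)) | ⨆ t, ℋ t]) ω = 0 := by
  have hAm : ∀ t, Measurable (A t) := fun t => (hA t).mono (ℋ.le _) le_rfl
  have hYG : ∀ t, ∀ᵐ ω ∂μ, ∀ a, |Y a t ω| ≤ ⨆ b, |Y b t ω| := fun t =>
    (hYbdd t).mono fun ω h a => le_ciSup h a
  set S : ℕ → Set Θ := fun n => {θ | 1 / ((n : ℝ) + 1) ≤ f θ (Astar θ) - f θ i}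
  have hS : ∀ n, MeasurableSet (S n) := fun n =>
    measurableSet_le measurable_const ((measurable_apply_of_countable hf hAstarmeas).sub (hf i))
  have hkey : ∀ n, ∀ᵐ ω ∂μ, θstar ω ∈ S n →
      μ[((fun ω => Astar (θstar ω)) ⁻¹' {i}).indicator (fun _ => (1 : ℝ)) | ⨆ t, ℋ t] ω = 0 := by
    intro n
    refine ae_condExp_iSup_indicator_eq_zero_of_cesaro_le (s := θstar ⁻¹' S n) ℋ (hθ (hS n))
      (Nat.one_div_pos_of_nat (n := n)) hregret fun t => ?_
    have hD := (hθ (hS n)).inter (hAm t (measurableSet_singleton i))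
    rw [integral_condExp_mul_condExp_eq_measureReal_inter (ℋ.le t) hD (hCI t _ i (hS n))
      (hTS t {i})]
    exact mul_measureReal_le_integral_sub_apply (hθ.prodMk (hAm t)).comap_le
      (fun a => hY a t) (fun a => (hf a).comp hθ) (hYint t) (hYG t) (hmean · t)
      ((hAstarmeas.comp measurable_fst).comp (comap_measurable _))
      (measurable_snd.comp (comap_measurable _)) (fun ω => hopt _ _) hD
      fun ω ⟨hωS, (hωi : A t ω = i)⟩ => by simp only [Function.comp_apply, hωi]; exact hωS
  filter_upwards [ae_all_iff.2 hkey] with ω hω hj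
  obtain ⟨n, hn⟩ := exists_nat_one_div_lt (sub_pos.2 (lt_of_lt_of_isLeast_argmax
    ⟨hopt (θstar ω), fun k hk => hmin (θstar ω) k hk⟩ (hij.trans_lt hj)))
  exact hω n hn.le
end

section
/- Suppose Thompson sampling on a countable action set achieves sub-linear Bayesian regret, i.e., (1/T) ∑_{t=1}^T E[Y_{A*,t} − Y_{A_t,t}] → 0 as T → ∞. Then for every subset B of the action set, P(A*(θ*) ∈ B | H_∞) = 1_B(A*(θ*)) almost surely. -/
open MeasureTheory Filter Topology

/-!
Fix an action `a` and put `D = f(θ*, A*) - f(θ*, a) ≥ 0` and `p_a = P(A* = a | H_∞)`.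
Thompson sampling and the conditional independence of `θ*` and `A_t` give
`E[D · P(A* = a | H_t)] = E[D · 1{A_t = a}]`, which is bounded by the regret of round `t`.
By Lévy's upward theorem the left side tends to `E[D · p_a]`, so sub-linear regret forces
`E[D · p_a] = 0`: wherever `p_a > 0`, the action `a` is optimal, hence `A* ≤ a` by the
tie-breaking rule. A strong induction on `a` then gives `p_a = 1{A* = a}`: if `A* = b < a`,
then already `p_b = 1`, which leaves no conditional mass for `a`.
-/

theorem eq_zero_of_tendsto_of_le_of_cesaro {c r : ℕ → ℝ} {L : ℝ}
    (hc : Tendsto c atTop (𝓝 L)) (hc0 : ∀ t, 0 ≤ c t) (hcr : ∀ t, c t ≤ r t)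
    (hr : Tendsto (fun T : ℕ => (1 / (T : ℝ)) * ∑ t ∈ Finset.range T, r t) atTop (𝓝 0)) :
    L = 0 := by
  simp only [one_div] at hr
  refine tendsto_nhds_unique hc.cesaro ?_
  refine tendsto_of_tendsto_of_tendsto_of_le_of_le tendsto_const_nhds hr (fun T => ?_)
    (fun T => ?_)
  · exact mul_nonneg (by positivity) (Finset.sum_nonneg fun t _ => hc0 t)
  · exact mul_le_mul_of_nonneg_left (Finset.sum_le_sum fun t _ => hcr t) (by positivity)

namespace MeasureTheory

variable {Ω : Type*} {m m0 : MeasurableSpace Ω} {μ : Measure Ω}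

theorem integral_mul_eq_of_forall_setIntegral_eq (hm : m ≤ m0)
    [SigmaFinite (μ.trim hm)] {u v g : Ω → ℝ} (hu : Integrable u μ) (hv : Integrable v μ)
    (huv : ∀ s, MeasurableSet[m] s → ∫ ω in s, u ω ∂μ = ∫ ω in s, v ω ∂μ)
    (hg : StronglyMeasurable[m] g) (hgu : Integrable (g * u) μ) (hgv : Integrable (g * v) μ) :
    ∫ ω, g ω * u ω ∂μ = ∫ ω, g ω * v ω ∂μ := by
  have hcond : μ[u | m] =ᵐ[μ] μ[v | m] :=
    ae_eq_condExp_of_forall_setIntegral_eq hm hv (fun s _ _ => integrable_condExp.integrableOn)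
      (fun s hs _ => by rw [setIntegral_condExp hm hu hs, huv s hs])
      stronglyMeasurable_condExp.aestronglyMeasurable
  calc ∫ ω, g ω * u ω ∂μ = ∫ ω, (μ[g * u | m]) ω ∂μ := (integral_condExp hm).symm
    _ = ∫ ω, (μ[g * v | m]) ω ∂μ := integral_congr_ae <|
        (condExp_mul_of_stronglyMeasurable_left hg hgu hu).trans <|
          (EventuallyEq.rfl.mul hcond).trans
            (condExp_mul_of_stronglyMeasurable_left hg hgv hv).symm
    _ = ∫ ω, g ω * v ω ∂μ := integral_condExp hm

theorem tendsto_integral_mul_condExp [IsFiniteMeasure μ] (ℱ : Filtration ℕ m0) {g X : Ω → ℝ}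
    (hg : Integrable g μ) {C : ℝ} (hX : ∀ᵐ ω ∂μ, |X ω| ≤ C) :
    Tendsto (fun n => ∫ ω, g ω * (μ[X | ℱ n]) ω ∂μ) atTop
      (𝓝 (∫ ω, g ω * (μ[X | ⨆ n, ℱ n]) ω ∂μ)) := by
  refine tendsto_integral_of_dominated_convergence (fun ω => |g ω| * C)
    (fun n => hg.aestronglyMeasurable.mul
      (stronglyMeasurable_condExp.mono (ℱ.le n)).aestronglyMeasurable)
    (hg.abs.mul_const C) (fun n => ?_) ?_
  · filter_upwards [ae_bdd_abs_condExp_of_ae_bdd_abs (m := ℱ n) hX] with ω hω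
    rw [Real.norm_eq_abs, abs_mul]
    exact mul_le_mul_of_nonneg_left hω (abs_nonneg _)
  · filter_upwards [tendsto_ae_condExp (ℱ := ℱ) X] with ω hω
    exact hω.const_mul (g ω)

theorem integral_eq_tsum_setIntegral_preimage_singleton {n : Ω → ℕ} (hn : Measurable n)
    {g : Ω → ℝ} (hg : Integrable g μ) :
    ∫ ω, g ω ∂μ = ∑' a, ∫ ω in n ⁻¹' {a}, g ω ∂μ := by
  rw [← integral_iUnion (fun a => hn (measurableSet_singleton a))
      (fun a b hab => (Set.disjoint_singleton.2 hab).preimage n) hg.integrableOn,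
    ← Set.preimage_iUnion, Set.iUnion_of_singleton, Set.preimage_univ, setIntegral_univ]

theorem integral_comp_eq_of_condExp_ae_eq [IsFiniteMeasure μ] (hm : m ≤ m0)
    {Y Z : ℕ → Ω → ℝ} (hY : ∀ a, Integrable (Y a) μ) (hYZ : ∀ a, μ[Y a | m] =ᵐ[μ] Z a)
    {n : Ω → ℕ} (hn : Measurable[m] n) (hYn : Integrable (fun ω => Y (n ω) ω) μ)
    (hZn : Integrable (fun ω => Z (n ω) ω) μ) :
    ∫ ω, Y (n ω) ω ∂μ = ∫ ω, Z (n ω) ω ∂μ := by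
  have hn0 : Measurable n := hn.mono hm le_rfl
  rw [integral_eq_tsum_setIntegral_preimage_singleton hn0 hYn,
    integral_eq_tsum_setIntegral_preimage_singleton hn0 hZn]
  refine tsum_congr fun a => ?_
  have hsa : MeasurableSet (n ⁻¹' {a}) := hn0 (measurableSet_singleton a)
  calc ∫ ω in n ⁻¹' {a}, Y (n ω) ω ∂μ = ∫ ω in n ⁻¹' {a}, Y a ω ∂μ :=
        setIntegral_congr_fun hsa fun ω (hω : n ω = a) => by rw [hω]
    _ = ∫ ω in n ⁻¹' {a}, Z a ω ∂μ := by
        rw [← setIntegral_condExp hm (hY a) (hn (measurableSet_singleton a))]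
        exact setIntegral_congr_ae hsa ((hYZ a).mono fun ω h _ => h)
    _ = ∫ ω in n ⁻¹' {a}, Z (n ω) ω ∂μ :=
        setIntegral_congr_fun hsa fun ω (hω : n ω = a) => by rw [hω]

theorem ae_forall_abs_le_condExp {Y Z : ℕ → Ω → ℝ} {G : Ω → ℝ} (hG : Integrable G μ)
    (hY : ∀ a, Integrable (Y a) μ) (hYG : ∀ᵐ ω ∂μ, ∀ a, |Y a ω| ≤ G ω)
    (hYZ : ∀ a, μ[Y a | m] =ᵐ[μ] Z a) :
    ∀ᵐ ω ∂μ, ∀ a, |Z a ω| ≤ (μ[G | m]) ω := by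
  rw [ae_all_iff]
  intro a
  have hup : μ[Y a | m] ≤ᵐ[μ] μ[G | m] :=
    condExp_mono (hY a) hG (hYG.mono fun ω h => (le_abs_self _).trans (h a))
  have hlow : μ[-G | m] ≤ᵐ[μ] μ[Y a | m] :=
    condExp_mono hG.neg (hY a) (hYG.mono fun ω h => neg_le_of_abs_le (h a))
  filter_upwards [hup, hlow, condExp_neg G m, hYZ a] with ω hup hlow hneg hZ
  rw [hneg, Pi.neg_apply] at hlow
  rw [← hZ, abs_le]
  exact ⟨hlow, hup⟩

theorem integrable_comp_of_forall_abs_le {Z : ℕ → Ω → ℝ} (hZ : ∀ a, Measurable (Z a))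
    {G : Ω → ℝ} (hG : Integrable G μ) (hZG : ∀ᵐ ω ∂μ, ∀ a, |Z a ω| ≤ G ω)
    {n : Ω → ℕ} (hn : Measurable n) :
    Integrable (fun ω => Z (n ω) ω) μ := by
  have hm : Measurable fun p : Ω × ℕ => Z p.2 p.1 := measurable_from_prod_countable_left hZ
  exact hG.mono' (hm.comp (measurable_id.prodMk hn)).aestronglyMeasurable
    (hZG.mono fun ω h => (Real.norm_eq_abs _).trans_le (h (n ω)))

section CountableCondLaw

variable [IsFiniteMeasure μ] {N : Ω → ℕ}

theorem condExp_indicator_preimage_singleton_ae_eq (hm : m ≤ m0) (hN : Measurable N)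
    (hle : ∀ a, ∀ᵐ ω ∂μ, (μ[(N ⁻¹' {a}).indicator (fun _ => (1 : ℝ)) | m]) ω ≠ 0 → N ω ≤ a)
    (a : ℕ) :
    μ[(N ⁻¹' {a}).indicator (fun _ => (1 : ℝ)) | m] =ᵐ[μ] (N ⁻¹' {a}).indicator fun _ => 1 := by
  set X : ℕ → Ω → ℝ := fun b => (N ⁻¹' {b}).indicator fun _ => 1
  have hX : ∀ b ω, X b ω = if N ω = b then 1 else 0 := fun b ω => by
    by_cases h : N ω = b <;> simp [X, h]
  have hXint : ∀ b, Integrable (X b) μ :=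
    fun b => (integrable_const 1).indicator (hN (measurableSet_singleton b))
  have hpair : ∀ a, ∀ᵐ ω ∂μ, ∀ b ≠ a, (μ[X a | m]) ω + (μ[X b | m]) ω ≤ 1 := by
    refine fun a => ae_all_iff.2 fun b => ?_
    by_cases hba : b = a
    · exact ae_of_all _ fun _ h => absurd hba h
    have hle1 : X a + X b ≤ᵐ[μ] fun _ => (1 : ℝ) := ae_of_all _ fun ω => by
      simp only [Pi.add_apply, hX]
      split_ifs with h1 h2 <;> norm_num
      exact hba (h2.symm.trans h1)
    filter_upwards [condExp_add (hXint a) (hXint b) m,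
      condExp_mono ((hXint a).add (hXint b)) (integrable_const 1) hle1] with ω hadd hmono _
    rwa [← Pi.add_apply, ← hadd, ← congrFun (condExp_const (μ := μ) hm (1 : ℝ)) ω]
  induction a using Nat.strong_induction_on with
  | _ a ih =>
  have hlt : ∀ᵐ ω ∂μ, ∀ b ∈ Set.Iio a, (μ[X b | m]) ω = X b ω :=
    (ae_ball_iff (Set.to_countable _)).2 ih
  have hp1 : ∀ᵐ ω ∂μ, |(μ[X a | m]) ω| ≤ 1 :=
    ae_bdd_abs_condExp_of_ae_bdd_abs
      (ae_of_all _ fun ω => by rw [hX]; split_ifs <;> norm_num)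
  have hpX : μ[X a | m] ≤ᵐ[μ] X a := by
    filter_upwards [hlt, hle a, hpair a, hp1] with ω hlt hle hpair hp1
    rw [hX]
    rcases lt_trichotomy (N ω) a with hNa | hNa | hNa
    · have := hpair (N ω) hNa.ne
      rw [hlt _ hNa, hX, if_pos rfl] at this
      rw [if_neg hNa.ne]
      linarith
    · rw [if_pos hNa]
      exact (le_abs_self _).trans hp1
    · rw [if_neg hNa.ne', not_not.1 (mt hle hNa.not_ge)]
  exact (integral_eq_iff_of_ae_le integrable_condExp (hXint a) hpX).1 (integral_condExp hm)

theorem condExp_indicator_preimage_ae_eq (hm : m ≤ m0) (hN : Measurable N)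
    (hle : ∀ a, ∀ᵐ ω ∂μ, (μ[(N ⁻¹' {a}).indicator (fun _ => (1 : ℝ)) | m]) ω ≠ 0 → N ω ≤ a)
    (B : Set ℕ) :
    μ[(N ⁻¹' B).indicator (fun _ => (1 : ℝ)) | m] =ᵐ[μ] (N ⁻¹' B).indicator fun _ => 1 := by
  have hB : Integrable ((N ⁻¹' B).indicator fun _ => (1 : ℝ)) μ :=
    (integrable_const 1).indicator (hN (Set.to_countable B).measurableSet)
  have hsingle : ∀ a ∈ B, μ[(N ⁻¹' {a}).indicator (fun _ => (1 : ℝ)) | m]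
      ≤ᵐ[μ] μ[(N ⁻¹' B).indicator (fun _ => (1 : ℝ)) | m] := fun a ha =>
    condExp_mono ((integrable_const 1).indicator (hN (measurableSet_singleton a))) hB
      (ae_of_all _ (Set.indicator_le_indicator_of_subset
        (Set.preimage_mono (Set.singleton_subset_iff.2 ha)) fun _ => zero_le_one))
  have hge : (N ⁻¹' B).indicator (fun _ => (1 : ℝ))
      ≤ᵐ[μ] μ[(N ⁻¹' B).indicator (fun _ => (1 : ℝ)) | m] := by
    filter_upwards [ae_all_iff.2 (condExp_indicator_preimage_singleton_ae_eq hm hN hle),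
      (ae_ball_iff (Set.to_countable B)).2 hsingle,
      condExp_nonneg (m := m)
        (ae_of_all μ (Set.indicator_nonneg fun _ _ => zero_le_one (α := ℝ)))]
      with ω hsingle_eq hsingle_le hnonneg
    by_cases hω : N ω ∈ B
    · have := hsingle_le (N ω) hω
      rw [hsingle_eq] at this
      simpa [hω] using this
    · simpa [hω] using hnonneg
  exact ((integral_eq_iff_of_ae_le hB integrable_condExp hge).1
    (integral_condExp hm).symm).symm

end CountableCondLaw

variable {Θ : Type*} [MeasurableSpace Θ]

theorem integral_comp_mul_indicator_eq_mul_condExp [IsFiniteMeasure μ] (hm : m ≤ m0)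
    {θ : Ω → Θ} (hθ : Measurable θ) {E : Set Ω} (hE : MeasurableSet E)
    (hCI : ∀ S, MeasurableSet S →
      μ[(θ ⁻¹' S ∩ E).indicator (fun _ => (1 : ℝ)) | m] =ᵐ[μ]
        fun ω => (μ[(θ ⁻¹' S).indicator (fun _ => (1 : ℝ)) | m]) ω *
          (μ[E.indicator (fun _ => (1 : ℝ)) | m]) ω)
    {φ : Θ → ℝ} (hφ : Measurable φ) (hφθ : Integrable (fun ω => φ (θ ω)) μ) :
    ∫ ω, φ (θ ω) * E.indicator (fun _ => (1 : ℝ)) ω ∂μ =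
      ∫ ω, φ (θ ω) * (μ[E.indicator (fun _ => (1 : ℝ)) | m]) ω ∂μ := by
  set ι := E.indicator fun _ => (1 : ℝ)
  set q := μ[ι | m]
  have hι : Integrable ι μ := (integrable_const 1).indicator hE
  have hιle : ∀ ω, |ι ω| ≤ 1 := fun ω => by by_cases h : ω ∈ E <;> simp [ι, h]
  have hqle : ∀ᵐ ω ∂μ, |q ω| ≤ 1 := ae_bdd_abs_condExp_of_ae_bdd_abs (ae_of_all _ hιle)
  have hqm : StronglyMeasurable[m] q := stronglyMeasurable_condExp
  have hqnorm : ∀ᵐ ω ∂μ, ‖q ω‖ ≤ 1 := hqle.mono fun ω h => (Real.norm_eq_abs _).trans_le h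
  refine integral_mul_eq_of_forall_setIntegral_eq hθ.comap_le hι integrable_condExp ?_
    (hφ.comp (comap_measurable θ)).stronglyMeasurable ?_ ?_
  · rintro _ ⟨S, hS, rfl⟩
    have hθS : MeasurableSet (θ ⁻¹' S) := hθ hS
    have h1S : Integrable ((θ ⁻¹' S).indicator fun _ => (1 : ℝ)) μ :=
      (integrable_const 1).indicator hθS
    calc ∫ ω in θ ⁻¹' S, ι ω ∂μ
          = ∫ ω, (θ ⁻¹' S ∩ E).indicator (fun _ => (1 : ℝ)) ω ∂μ := by
          rw [← integral_indicator hθS, Set.indicator_indicator]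
      _ = ∫ ω, (μ[(θ ⁻¹' S).indicator (fun _ => (1 : ℝ)) | m]) ω * q ω ∂μ := by
          rw [← integral_condExp hm]; exact integral_congr_ae (hCI S hS)
      _ = ∫ ω, (θ ⁻¹' S).indicator (fun _ => (1 : ℝ)) ω * q ω ∂μ := by
          have h1Sq := h1S.mul_bdd (hqm.mono hm).aestronglyMeasurable hqnorm
          rw [← integral_condExp hm
            (f := fun ω => (θ ⁻¹' S).indicator (fun _ => (1 : ℝ)) ω * q ω)]
          exact integral_congr_ae (condExp_mul_of_stronglyMeasurable_right hqm h1Sq h1S).symm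
      _ = ∫ ω in θ ⁻¹' S, q ω ∂μ := by
          rw [← integral_indicator hθS]
          congr 1 with ω
          by_cases h : ω ∈ θ ⁻¹' S <;> simp [h]
  · exact hφθ.mul_bdd hι.aestronglyMeasurable
      (ae_of_all _ fun ω => (Real.norm_eq_abs _).trans_le (hιle ω))
  · exact hφθ.mul_bdd (hqm.mono hm).aestronglyMeasurable hqnorm

theorem ae_comp_eq_zero_of_condExp_iSup_ne_zero [IsFiniteMeasure μ] (ℋ : Filtration ℕ m0)
    {θ : Ω → Θ} (hθ : Measurable θ) {φ : Θ → ℝ} (hφ : Measurable φ) (hφ0 : 0 ≤ φ)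
    (hφθ : Integrable (fun ω => φ (θ ω)) μ) {E : ℕ → Set Ω} (hE : ∀ t, MeasurableSet (E t))
    {F : Set Ω}
    (hTS : ∀ t, μ[(E t).indicator (fun _ => (1 : ℝ)) | ℋ t]
      =ᵐ[μ] μ[F.indicator (fun _ => (1 : ℝ)) | ℋ t])
    (hCI : ∀ t S, MeasurableSet S →
      μ[(θ ⁻¹' S ∩ E t).indicator (fun _ => (1 : ℝ)) | ℋ t] =ᵐ[μ]
        fun ω => (μ[(θ ⁻¹' S).indicator (fun _ => (1 : ℝ)) | ℋ t]) ω *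
          (μ[(E t).indicator (fun _ => (1 : ℝ)) | ℋ t]) ω)
    {r : ℕ → ℝ} (hr : ∀ t, ∫ ω, φ (θ ω) * (E t).indicator (fun _ => (1 : ℝ)) ω ∂μ ≤ r t)
    (hcesaro : Tendsto (fun T : ℕ => (1 / (T : ℝ)) * ∑ t ∈ Finset.range T, r t) atTop (𝓝 0)) :
    ∀ᵐ ω ∂μ, (μ[F.indicator (fun _ => (1 : ℝ)) | ⨆ t, ℋ t]) ω ≠ 0 → φ (θ ω) = 0 := by
  set p := μ[F.indicator (fun _ => (1 : ℝ)) | ⨆ t, ℋ t]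
  have hF1 : ∀ᵐ ω ∂μ, |F.indicator (fun _ => (1 : ℝ)) ω| ≤ 1 :=
    ae_of_all _ fun ω => by by_cases h : ω ∈ F <;> simp [h]
  have hsampled : ∀ t, ∫ ω, φ (θ ω) * (μ[F.indicator (fun _ => (1 : ℝ)) | ℋ t]) ω ∂μ
      = ∫ ω, φ (θ ω) * (E t).indicator (fun _ => (1 : ℝ)) ω ∂μ := fun t =>
    (integral_congr_ae (EventuallyEq.rfl.mul (hTS t).symm)).trans
      (integral_comp_mul_indicator_eq_mul_condExp (ℋ.le t) hθ (hE t) (hCI t) hφ hφθ).symm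
  have hzero : ∫ ω, φ (θ ω) * p ω ∂μ = 0 := by
    refine eq_zero_of_tendsto_of_le_of_cesaro (tendsto_integral_mul_condExp ℋ hφθ hF1)
      (fun t => ?_) (fun t => (hsampled t).trans_le (hr t)) hcesaro
    rw [hsampled t]
    exact integral_nonneg fun ω =>
      mul_nonneg (hφ0 _) (Set.indicator_nonneg (fun _ _ => zero_le_one) _)
  have hint : Integrable (fun ω => φ (θ ω) * p ω) μ :=
    hφθ.mul_bdd (stronglyMeasurable_condExp.mono (iSup_le ℋ.le)).aestronglyMeasurable
      ((ae_bdd_abs_condExp_of_ae_bdd_abs hF1).mono fun ω h => (Real.norm_eq_abs _).trans_le h)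
  have hp0 : 0 ≤ᵐ[μ] p :=
    condExp_nonneg (ae_of_all μ (Set.indicator_nonneg fun _ _ => zero_le_one (α := ℝ)))
  filter_upwards [(integral_eq_zero_iff_of_nonneg_ae
    (hp0.mono fun ω h => mul_nonneg (hφ0 _) h) hint).1 hzero] with ω h hp
  exact (mul_eq_zero.1 h).resolve_right hp

end MeasureTheory

theorem thompson_posterior_indicator
    {Ω : Type*} {m0 : MeasurableSpace Ω} {μ : Measure Ω} [IsProbabilityMeasure μ]
    {Θ : Type*} [mΘ : MeasurableSpace Θ]
    (θstar : Ω → Θ) (hθ : Measurable θstar)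
    (f : Θ → ℕ → ℝ) (hf : ∀ a, Measurable fun θ => f θ a)
    (Astar : Θ → ℕ) (hAstarmeas : Measurable Astar)
    -- `Astar θ` is the arg max of `f θ ·` with smallest-index tie-breaking
    (hopt : ∀ θ a, f θ a ≤ f θ (Astar θ))
    (hmin : ∀ θ k, (∀ a, f θ a ≤ f θ k) → Astar θ ≤ k)
    (ℋ : Filtration ℕ m0)
    -- `A t` is the action drawn at time `t+1`, chosen given the history `ℋ t`
    (A : ℕ → Ω → ℕ) (hA : ∀ t, Measurable[ℋ (t + 1)] (A t))
    (Y : ℕ → ℕ → Ω → ℝ) (hY : ∀ a t, Measurable (Y a t))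
    (hYint : ∀ t, Integrable (fun ω => ⨆ a, |Y a t ω|) μ)
    (hYbdd : ∀ t, ∀ᵐ ω ∂μ, BddAbove (Set.range fun a => |Y a t ω|))
    (hmean : ∀ a t : ℕ,
      μ[Y a t | MeasurableSpace.comap (fun ω => (θstar ω, A t ω)) inferInstance]
        =ᵐ[μ] fun ω => f (θstar ω) a)
    -- the Thompson sampling property
    (hTS : ∀ (t : ℕ) (B : Set ℕ),
      μ[Set.indicator (A t ⁻¹' B) (fun _ => (1 : ℝ)) | ℋ t]
        =ᵐ[μ] μ[Set.indicator ((fun ω => Astar (θstar ω)) ⁻¹' B) (fun _ => (1 : ℝ)) | ℋ t])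
    -- conditional independence of `θ*` and `A t` given the history `ℋ t`
    (hCI : ∀ (t : ℕ) (S : Set Θ) (a : ℕ), MeasurableSet S →
      μ[Set.indicator (θstar ⁻¹' S ∩ A t ⁻¹' {a}) (fun _ => (1 : ℝ)) | ℋ t]
        =ᵐ[μ] fun ω => (μ[Set.indicator (θstar ⁻¹' S) (fun _ => (1 : ℝ)) | ℋ t]) ω *
            (μ[Set.indicator (A t ⁻¹' {a}) (fun _ => (1 : ℝ)) | ℋ t]) ω)
    -- sub-linear Bayesian regret
    (hregret : Tendsto (fun T : ℕ => (1 / (T : ℝ)) * ∑ t ∈ Finset.range T,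
        ∫ ω, (Y (Astar (θstar ω)) t ω - Y (A t ω) t ω) ∂μ) atTop (𝓝 0))
    (B : Set ℕ) :
    μ[Set.indicator ((fun ω => Astar (θstar ω)) ⁻¹' B) (fun _ => (1 : ℝ)) | ⨆ t, ℋ t]
      =ᵐ[μ] Set.indicator ((fun ω => Astar (θstar ω)) ⁻¹' B) (fun _ => (1 : ℝ)) := by
  set N : Ω → ℕ := fun ω => Astar (θstar ω)
  have hN : Measurable N := hAstarmeas.comp hθ
  have hA₀ : ∀ t, Measurable (A t) := fun t => (hA t).mono (ℋ.le _) le_rfl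
  have hYsup : ∀ t, ∀ᵐ ω ∂μ, ∀ a, |Y a t ω| ≤ ⨆ b, |Y b t ω| :=
    fun t => (hYbdd t).mono fun ω h a => le_ciSup h a
  have hYint' : ∀ t {n : Ω → ℕ}, Measurable n → Integrable (fun ω => Y (n ω) t ω) μ :=
    fun t _ hn => integrable_comp_of_forall_abs_le (hY · t) (hYint t) (hYsup t) hn
  -- `f (θ* ω) a = E[Y a 0 | θ*, A 0]` is dominated by `E[⨆ b, |Y b 0| | θ*, A 0]`
  have hfint : ∀ {n : Ω → ℕ}, Measurable n → Integrable (fun ω => f (θstar ω) (n ω)) μ :=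
    integrable_comp_of_forall_abs_le (fun a => (hf a).comp hθ) integrable_condExp
      (ae_forall_abs_le_condExp (hYint 0) (fun a => hYint' 0 measurable_const) (hYsup 0)
        (Z := fun a ω => f (θstar ω) a) (hmean · 0))
  -- both `A*` and `A t` are functions of `(θ*, A t)`, so `hmean` evaluates the regret
  have hgap : ∀ t, ∫ ω, (f (θstar ω) (N ω) - f (θstar ω) (A t ω)) ∂μ
      = ∫ ω, (Y (N ω) t ω - Y (A t ω) t ω) ∂μ := by
    intro t
    have hm := (hθ.prodMk (hA₀ t)).comap_le
    have hcomap := comap_measurable (m := inferInstance) fun ω => (θstar ω, A t ω)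
    have hsample := fun {n : Ω → ℕ} => integral_comp_eq_of_condExp_ae_eq hm (n := n)
      (Y := fun a => Y a t) (Z := fun a ω => f (θstar ω) a) (fun a => hYint' t measurable_const)
      (hmean · t)
    rw [integral_sub (hfint hN) (hfint (hA₀ t)),
      integral_sub (hYint' t hN) (hYint' t (hA₀ t))]
    congr 1
    · exact (hsample (hAstarmeas.comp (measurable_fst.comp hcomap)) (hYint' t hN)
        (hfint hN)).symm
    · exact (hsample (measurable_snd.comp hcomap) (hYint' t (hA₀ t)) (hfint (hA₀ t))).symm
  refine condExp_indicator_preimage_ae_eq (iSup_le ℋ.le) hN (fun a => ?_) B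
  have hφ : Measurable fun ϑ => f ϑ (Astar ϑ) - f ϑ a :=
    ((measurable_from_prod_countable_left (f := fun p : Θ × ℕ => f p.1 p.2) hf).comp
      (measurable_id.prodMk hAstarmeas)).sub (hf a)
  have hcost : ∀ t ω,
      0 ≤ (f (θstar ω) (N ω) - f (θstar ω) a) * (A t ⁻¹' {a}).indicator 1 ω ∧
      (f (θstar ω) (N ω) - f (θstar ω) a) * (A t ⁻¹' {a}).indicator 1 ω
        ≤ f (θstar ω) (N ω) - f (θstar ω) (A t ω) := fun t ω => by
    by_cases h : A t ω = a <;> simp [h, N, hopt]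
  have hposterior := ae_comp_eq_zero_of_condExp_iSup_ne_zero ℋ hθ hφ
    (fun ϑ => sub_nonneg.2 (hopt ϑ a)) ((hfint hN).sub (hfint measurable_const))
    (fun t => hA₀ t (measurableSet_singleton a)) (hTS · {a}) (fun t S hS => hCI t S a hS)
    (fun t => (integral_mono_of_nonneg (ae_of_all _ fun ω => (hcost t ω).1)
      ((hfint hN).sub (hfint (hA₀ t))) (ae_of_all _ fun ω => (hcost t ω).2)).trans_eq (hgap t))
    hregret
  filter_upwards [hposterior] with ω h hp
  exact hmin _ _ fun b => by linarith [hopt (θstar ω) b, h hp]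
end

section
/- Let regret contributions r_t ≥ 0 and suppose a policy π¹ has cumulative regret ∑_{t=1}^T r_t^{(1)} ≤ C√T for all T. Define policy π² which at times t = i² (i ∈ ℤ⁺) incurs regret at most a constant Δ > 0 (playing a fixed action) and at all other times plays π¹ steps in order. Then the cumulative regret of π² over horizon T is at most C√T + Δ⌊√T⌋ = O(√T), yet π² plays the fixed action infinitely often. -/
/-!
Split `[1, T]` into the perfect squares, of which there are `⌊√T⌋`, each costing at most `Δ`, and
the non-squares. As `s` is strictly increasing with `s 0 ≥ 1`, the non-squares up to `T` are among
`s 0, …, s (T - 1)`, so together they cost at most the first `T` steps of `π¹`, i.e. `C√T`.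
-/

open Finset

theorem StrictMono.lt_of_apply_le {s : ℕ → ℕ} (hs : StrictMono s) (h0 : 0 < s 0) {m T : ℕ}
    (h : s m ≤ T) : m < T := by
  have := hs.add_le_nat m 0
  simp only [add_zero] at this
  omega

open Classical in
theorem filter_Icc_one_posSquare_eq_image (T : ℕ) :
    {t ∈ Icc 1 T | ∃ i, 0 < i ∧ t = i ^ 2} = (Icc 1 T.sqrt).image (· ^ 2) := by
  ext t
  simp only [mem_filter, mem_Icc, mem_image]
  constructor
  · rintro ⟨⟨-, htT⟩, i, hi, rfl⟩
    exact ⟨i, ⟨hi, Nat.le_sqrt'.2 htT⟩, rfl⟩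
  · rintro ⟨i, ⟨hi, hiT⟩, rfl⟩
    exact ⟨⟨Nat.one_le_pow _ _ hi, Nat.le_sqrt'.1 hiT⟩, i, hi, rfl⟩

open Classical in
theorem sum_filter_Icc_one_posSquare {M : Type*} [AddCommMonoid M] (f : ℕ → M) (T : ℕ) :
    ∑ t ∈ Icc 1 T with ∃ i, 0 < i ∧ t = i ^ 2, f t = ∑ i ∈ Icc 1 T.sqrt, f (i ^ 2) := by
  rw [filter_Icc_one_posSquare_eq_image,
    sum_image fun _ _ _ _ hab => Nat.pow_left_injective two_ne_zero hab]

theorem sum_filter_Icc_one_mem_range_le {M : Type*} [AddCommMonoid M] [PartialOrder M]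
    [IsOrderedAddMonoid M] {f : ℕ → M} (hf : ∀ t, 0 ≤ f t) {s : ℕ → ℕ}
    [DecidablePred (· ∈ Set.range s)] (hs : StrictMono s) (h0 : 0 < s 0) (T : ℕ) :
    ∑ t ∈ Icc 1 T with t ∈ Set.range s, f t ≤ ∑ m ∈ range T, f (s m) := by
  have hsub : {t ∈ Icc 1 T | t ∈ Set.range s} ⊆ (range T).image s := by
    rintro t ht
    obtain ⟨htT, m, rfl⟩ := mem_filter.1 ht
    exact mem_image_of_mem s (mem_range.2 (hs.lt_of_apply_le h0 (mem_Icc.1 htT).2))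
  calc ∑ t ∈ Icc 1 T with t ∈ Set.range s, f t
      ≤ ∑ t ∈ (range T).image s, f t := sum_le_sum_of_subset_of_nonneg hsub fun t _ _ => hf t
    _ = ∑ m ∈ range T, f (s m) := sum_image fun _ _ _ _ hab => hs.injective hab

theorem infinite_setOf_posSquare : {t : ℕ | ∃ i, 0 < i ∧ t = i ^ 2}.Infinite :=
  Set.infinite_of_injective_forall_mem (f := fun i : ℕ => (i + 1) ^ 2)
    (fun _ _ hab => Nat.succ_injective (Nat.pow_left_injective two_ne_zero hab))
    fun i => ⟨i + 1, i.succ_pos, rfl⟩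

/-- `r1 k` is the regret of the `(k+1)`-th step of `π¹`, `r2 t` the regret of `π²` at time `t ≥ 1`,
and `s` enumerates the non-square times in increasing order. -/
theorem sublinear_regret_counterexample_general
    (C Δ : ℝ)
    (r1 r2 : ℕ → ℝ) (hr2nonneg : ∀ t, 0 ≤ r2 t)
    (hr1 : ∀ T : ℕ, ∑ k ∈ Finset.range T, r1 k ≤ C * Real.sqrt T)
    (s : ℕ → ℕ) (hs : StrictMono s)
    (hsrange : Set.range s = {t : ℕ | 1 ≤ t ∧ ¬∃ i : ℕ, 0 < i ∧ t = i ^ 2})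
    (hinterleave : ∀ m : ℕ, r2 (s m) = r1 m)
    (hsquare : ∀ i : ℕ, 0 < i → r2 (i ^ 2) ≤ Δ) :
    (∀ T : ℕ, ∑ t ∈ Finset.Icc 1 T, r2 t ≤ C * Real.sqrt T + Δ * Nat.sqrt T) ∧
      {t : ℕ | ∃ i : ℕ, 0 < i ∧ t = i ^ 2}.Infinite := by
  classical
  refine ⟨fun T => ?_, infinite_setOf_posSquare⟩
  have hs0 : 0 < s 0 := (hsrange ▸ Set.mem_range_self 0 : s 0 ∈ {t : ℕ | 1 ≤ t ∧ _}).1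
  have hsquares : ∑ t ∈ Icc 1 T with ∃ i, 0 < i ∧ t = i ^ 2, r2 t ≤ Δ * T.sqrt := by
    rw [sum_filter_Icc_one_posSquare]
    calc ∑ i ∈ Icc 1 T.sqrt, r2 (i ^ 2) ≤ ∑ _i ∈ Icc 1 T.sqrt, Δ :=
          sum_le_sum fun i hi => hsquare i (mem_Icc.1 hi).1
      _ = Δ * T.sqrt := by simp [mul_comm]
  have hnonsquares : ∑ t ∈ Icc 1 T with ¬∃ i, 0 < i ∧ t = i ^ 2, r2 t ≤ C * √T := by
    have hrange : ∀ t ∈ Icc 1 T, (¬∃ i, 0 < i ∧ t = i ^ 2) ↔ t ∈ Set.range s := fun t ht => by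
      simp [hsrange, (mem_Icc.1 ht).1]
    calc ∑ t ∈ Icc 1 T with ¬∃ i, 0 < i ∧ t = i ^ 2, r2 t
        = ∑ t ∈ Icc 1 T with t ∈ Set.range s, r2 t := by rw [filter_congr hrange]
      _ ≤ ∑ m ∈ range T, r2 (s m) := sum_filter_Icc_one_mem_range_le hr2nonneg hs hs0 T
      _ = ∑ m ∈ range T, r1 m := sum_congr rfl fun m _ => hinterleave m
      _ ≤ C * √T := hr1 T
  rw [← sum_filter_add_sum_filter_not _ fun t => ∃ i, 0 < i ∧ t = i ^ 2]
  linarith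

/-- The paper's counterexample: interleaving a fixed action (with per-step regret at most `Δ`)
at the perfect-square time steps with a policy `π¹` of cumulative regret `≤ C√T` (played in order
at the non-square time steps) yields a policy `π²` whose cumulative regret over horizon `T` is at
most `C√T + Δ⌊√T⌋ = O(√T)`, while the fixed action is played infinitely often (the set of
perfect-square times is infinite).  Here `r1 k` is the regret of the `(k+1)`-th step of `π¹`,
`r2 t` is the regret of `π²` at time `t ≥ 1`, and `s` enumerates the non-square times in
increasing order. -/
theorem sublinear_regret_counterexample
    (C Δ : ℝ) (hC : 0 ≤ C) (hΔ : 0 < Δ)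
    (r1 r2 : ℕ → ℝ) (hr1nonneg : ∀ k, 0 ≤ r1 k) (hr2nonneg : ∀ t, 0 ≤ r2 t)
    (hr1 : ∀ T : ℕ, ∑ k ∈ Finset.range T, r1 k ≤ C * Real.sqrt T)
    (s : ℕ → ℕ) (hs : StrictMono s)
    (hsrange : Set.range s = {t : ℕ | 1 ≤ t ∧ ¬∃ i : ℕ, 0 < i ∧ t = i ^ 2})
    (hinterleave : ∀ m : ℕ, r2 (s m) = r1 m)
    (hsquare : ∀ i : ℕ, 0 < i → r2 (i ^ 2) ≤ Δ) :
    (∀ T : ℕ, ∑ t ∈ Finset.Icc 1 T, r2 t ≤ C * Real.sqrt T + Δ * Nat.sqrt T) ∧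
      {t : ℕ | ∃ i : ℕ, 0 < i ∧ t = i ^ 2}.Infinite :=
  sublinear_regret_counterexample_general C Δ r1 r2 hr2nonneg hr1 s hs hsrange hinterleave hsquare
end
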